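/- If a smooth vector field X on \mathbb{R}^n is \delta_\lambda-homogeneous of degree 1, then its coefficient b_k depends only on the variables x_i with \sigma_i \le \sigma_k - 1; in particular, b_k(x) = b_k(x_1, \ldots, x_{k-1}) depends only on the first k-1 coordinates. -/

import Mathlib

open scoped BigOperators

def dil {n : ℕ} (σ : Fin n → ℕ) (l : ℝ) (x : Fin n → ℝ) : Fin n → ℝ :=
  fun i => l ^ σ i * x i

noncomputable def vfAct {n : ℕ} (b : Fin n → (Fin n → ℝ) → ℝ) (f : (Fin n → ℝ) → ℝ)
    (x : Fin n → ℝ) : ℝ :=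
  ∑ k : Fin n, b k x * fderiv ℝ f x (Pi.single k 1)

noncomputable def dilL {n : ℕ} (σ : Fin n → ℕ) (l : ℝ) : (Fin n → ℝ) →L[ℝ] (Fin n → ℝ) :=
  ContinuousLinearMap.pi fun i => (l ^ σ i) • ContinuousLinearMap.proj i

lemma dilL_single {n : ℕ} (σ : Fin n → ℕ) (l : ℝ) (j : Fin n) :
    dilL σ l (Pi.single j 1) = (l ^ σ j) • (Pi.single j 1 : Fin n → ℝ) := by
  funext i
  simp [dilL, Pi.single_apply]
  by_cases h : i = j <;> simp [h]

lemma b_hom (n : ℕ) (σ : Fin n → ℕ) (hσ1 : ∀ i, 1 ≤ σ i)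
    (b : Fin n → (Fin n → ℝ) → ℝ)
    (hhom : ∀ f : (Fin n → ℝ) → ℝ, ContDiff ℝ (⊤ : ℕ∞) f → ∀ l : ℝ, 0 < l → ∀ x,
      vfAct b (fun y => f (dil σ l y)) x = l * vfAct b f (dil σ l x))
    (k : Fin n) (l : ℝ) (hl : 0 < l) (x : Fin n → ℝ) :
    b k (dil σ l x) = l ^ (σ k - 1) * b k x := by
  have projk : ContDiff ℝ (⊤ : ℕ∞) (fun y : Fin n → ℝ => y k) :=
    (ContinuousLinearMap.proj k : (Fin n → ℝ) →L[ℝ] ℝ).contDiff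
  have key := hhom (fun y => y k) projk l hl x
  have h1 : (fun y : Fin n → ℝ => dil σ l y k)
      = ⇑((l ^ σ k) • (ContinuousLinearMap.proj k : (Fin n → ℝ) →L[ℝ] ℝ)) := by
    funext y; simp [dil]
  have h2 : ∀ z, fderiv ℝ (fun y : Fin n → ℝ => dil σ l y k) z
      = (l ^ σ k) • (ContinuousLinearMap.proj k : (Fin n → ℝ) →L[ℝ] ℝ) := by
    intro z; rw [h1]; exact ContinuousLinearMap.fderiv _
  have h3 : ∀ z, fderiv ℝ (fun y : Fin n → ℝ => y k) z
      = (ContinuousLinearMap.proj k : (Fin n → ℝ) →L[ℝ] ℝ) := by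
    intro z; exact (ContinuousLinearMap.proj k : (Fin n → ℝ) →L[ℝ] ℝ).fderiv
  rw [vfAct, vfAct] at key
  simp only [h2, h3] at key
  simp only [ContinuousLinearMap.smul_apply, ContinuousLinearMap.proj_apply,
    Pi.single_apply, smul_eq_mul, mul_ite, mul_one, mul_zero,
    Finset.sum_ite_eq, Finset.mem_univ, if_true] at key
  have hlne : l ≠ 0 := ne_of_gt hl
  have hpow : l ^ σ k = l * l ^ (σ k - 1) := by
    conv_lhs => rw [← Nat.succ_pred_eq_of_pos (hσ1 k)]
    rw [pow_succ']
    rfl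
  rw [hpow] at key
  have key2 : l * (l ^ (σ k - 1) * b k x) = l * (b k (dil σ l x)) := by rw [← key]; ring
  exact (mul_left_cancel₀ hlne key2).symm

lemma deriv_zero_hom (n : ℕ) (σ : Fin n → ℕ) (m : ℕ) (φ : (Fin n → ℝ) → ℝ)
    (hφ : ContDiff ℝ (⊤ : ℕ∞) φ)
    (hom : ∀ l : ℝ, 0 < l → ∀ x, φ (dil σ l x) = l ^ m * φ x)
    (j : Fin n) (hj : m < σ j) (x : Fin n → ℝ) :
    fderiv ℝ φ x (Pi.single j 1) = 0 := by
  have hdiff : Differentiable ℝ φ := hφ.differentiable (by simp)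
  have hrel : ∀ l : ℝ, 0 < l →
      fderiv ℝ φ x (Pi.single j 1)
        = l ^ (σ j - m) * fderiv ℝ φ (dil σ l x) (Pi.single j 1) := by
    intro l hl
    have hcomp : (fun y => φ (dilL σ l y)) = fun y => l ^ m * φ y := by
      funext y; exact hom l hl y
    have hd1 : fderiv ℝ (fun y => φ (dilL σ l y)) x
        = (fderiv ℝ φ (dilL σ l x)).comp (dilL σ l) := by
      have := fderiv_comp x (hdiff (dilL σ l x)) (dilL σ l).differentiableAt
      rw [(dilL σ l).fderiv] at this
      exact this
    have hd2 : fderiv ℝ (fun y => l ^ m * φ y) x = (l ^ m) • fderiv ℝ φ x := by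
      exact fderiv_const_mul (hdiff x) _
    rw [hcomp] at hd1
    have := hd1.symm.trans hd2
    have happ := congrArg (fun L => L (Pi.single j 1)) this
    simp only [ContinuousLinearMap.comp_apply, ContinuousLinearMap.smul_apply,
      smul_eq_mul, dilL_single, map_smul] at happ
    have hlne : l ≠ 0 := ne_of_gt hl
    have hpow : l ^ σ j = l ^ m * l ^ (σ j - m) := by
      rw [← pow_add, Nat.add_sub_cancel' (le_of_lt hj)]
    have hmne : (l : ℝ) ^ m ≠ 0 := pow_ne_zero _ hlne
    have : (dilL σ l x) = dil σ l x := rfl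
    rw [this] at happ
    apply mul_left_cancel₀ hmne
    rw [← happ, hpow]; ring
  have hcont : Continuous (fun l : ℝ => l ^ (σ j - m) * fderiv ℝ φ (dil σ l x) (Pi.single j 1)) := by
    have hc1 : Continuous (fun l : ℝ => dil σ l x) := by
      apply continuous_pi
      intro i
      exact (continuous_pow (σ i)).mul continuous_const
    have hc2 : Continuous (fderiv ℝ φ) := hφ.continuous_fderiv (by simp)
    exact (continuous_pow _).mul ((hc2.comp hc1).clm_apply continuous_const)
  have hlim : Filter.Tendsto (fun l : ℝ => l ^ (σ j - m) * fderiv ℝ φ (dil σ l x) (Pi.single j 1))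
      (nhdsWithin 0 (Set.Ioi 0)) (nhds 0) := by
    have := (hcont.tendsto 0).mono_left (nhdsWithin_le_nhds (s := Set.Ioi (0:ℝ)))
    have h0 : (0:ℝ) ^ (σ j - m) = 0 := by
      apply zero_pow
      omega
    simpa [h0] using this
  have hconst : Filter.Tendsto (fun _ : ℝ => fderiv ℝ φ x (Pi.single j 1))
      (nhdsWithin 0 (Set.Ioi 0)) (nhds (fderiv ℝ φ x (Pi.single j 1))) := tendsto_const_nhds
  have heq : (fun _ : ℝ => fderiv ℝ φ x (Pi.single j 1)) =ᶠ[nhdsWithin 0 (Set.Ioi 0)]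
      (fun l : ℝ => l ^ (σ j - m) * fderiv ℝ φ (dil σ l x) (Pi.single j 1)) := by
    filter_upwards [self_mem_nhdsWithin] with l hl
    exact hrel l hl
  exact tendsto_nhds_unique (hconst.congr' heq) hlim

lemma const_along (n : ℕ) (φ : (Fin n → ℝ) → ℝ) (hdiff : Differentiable ℝ φ)
    (j : Fin n) (hz : ∀ z, fderiv ℝ φ z (Pi.single j 1) = 0)
    (z : Fin n → ℝ) (a : ℝ) : φ (Function.update z j a) = φ z := by
  set p : ℝ → (Fin n → ℝ) := fun t => z + (t - z j) • (Pi.single j 1 : Fin n → ℝ) with hp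
  have hpeq : ∀ t, p t = Function.update z j t := by
    intro t; funext i
    by_cases h : i = j
    · subst h; simp [hp, Pi.single_apply]
    · simp [hp, Pi.single_apply, h, Function.update_of_ne h]
  have hderiv : ∀ t, HasDerivAt (fun t => φ (p t)) 0 t := by
    intro t
    have hpd : HasDerivAt p (Pi.single j 1) t := by
      have h1 : HasDerivAt (fun t : ℝ => (t - z j)) 1 t := by
        simpa using (hasDerivAt_id t).sub_const (z j)
      have h2 : HasDerivAt (fun t : ℝ => (t - z j) • (Pi.single j 1 : Fin n → ℝ))
          ((1:ℝ) • (Pi.single j 1 : Fin n → ℝ)) t := h1.smul_const _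
      simpa [hp] using h2.const_add z
    have := (hdiff (p t)).hasFDerivAt.comp_hasDerivAt t hpd
    rw [hz (p t)] at this; exact this
  have hconst : ∀ s t : ℝ, φ (p s) = φ (p t) := by
    intro s t
    exact is_const_of_deriv_eq_zero (fun u => (hderiv u).differentiableAt)
      (fun u => (hderiv u).deriv) s t
  have := hconst a (z j)
  rw [hpeq a, hpeq (z j), Function.update_eq_self] at this
  exact this

lemma main_dep (n : ℕ) (σ : Fin n → ℕ) (m : ℕ) (φ : (Fin n → ℝ) → ℝ)
    (hdiff : Differentiable ℝ φ)
    (hz : ∀ j : Fin n, m < σ j → ∀ z, fderiv ℝ φ z (Pi.single j 1) = 0)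
    (x y : Fin n → ℝ) (hxy : ∀ i, σ i ≤ m → x i = y i) : φ x = φ y := by
  set zf : ℕ → (Fin n → ℝ) := fun i j => if (j : ℕ) < i then y j else x j with hzf
  have hstep : ∀ i : ℕ, φ (zf i) = φ x := by
    intro i
    induction i with
    | zero => congr 1
    | succ i ih =>
      by_cases hi : i < n
      · set ii : Fin n := ⟨i, hi⟩ with hii
        have hupd : zf (i + 1) = Function.update (zf i) ii (y ii) := by
          funext j
          by_cases hji : j = ii
          · subst hji
            simp [hzf, hii, Function.update_self]
          · have hne : (j : ℕ) ≠ i := fun h => hji (Fin.ext h)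
            rw [Function.update_of_ne hji]
            simp only [hzf]
            have : (j : ℕ) < i + 1 ↔ (j : ℕ) < i := by omega
            simp [this]
        rw [hupd]
        by_cases hσ : σ ii ≤ m
        · have hxyi : x ii = y ii := hxy ii hσ
          have : zf i ii = x ii := by simp [hzf, hii]
          rw [← hxyi, ← this, Function.update_eq_self]
          exact ih
        · have := const_along n φ hdiff ii (hz ii (by omega)) (zf i) (y ii)
          rw [this]; exact ih
      · have : zf (i + 1) = zf i := by
          funext j
          have hj := j.isLt
          have h1 : (j : ℕ) < i + 1 := by omega
          have h2 : (j : ℕ) < i := by omega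
          simp [hzf, h1, h2]
        rw [this]; exact ih
  have hy : zf n = y := by
    funext j
    simp [hzf, j.isLt]
  rw [← hy, hstep n]

/-- if a smooth vector field is `δ_λ`-homogeneous of degree 1, then
`b_k` depends only on the variables `x_i` with `σ_i ≤ σ_k - 1`; in particular it depends
only on the first `k-1` coordinates. -/
theorem stmt1 (n : ℕ) (σ : Fin n → ℕ) (hσ1 : ∀ i, 1 ≤ σ i) (hσmono : Monotone σ)
    (b : Fin n → (Fin n → ℝ) → ℝ) (hb : ∀ k, ContDiff ℝ (⊤ : ℕ∞) (b k))
    (hhom : ∀ f : (Fin n → ℝ) → ℝ, ContDiff ℝ (⊤ : ℕ∞) f → ∀ l : ℝ, 0 < l → ∀ x,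
      vfAct b (fun y => f (dil σ l y)) x = l * vfAct b f (dil σ l x)) :
    ∀ k, (∀ x y : Fin n → ℝ, (∀ i, σ i ≤ σ k - 1 → x i = y i) → b k x = b k y) ∧
      (∀ x y : Fin n → ℝ, (∀ i : Fin n, (i : ℕ) < (k : ℕ) → x i = y i) → b k x = b k y) := by
  intro k
  have hom : ∀ l : ℝ, 0 < l → ∀ x, b k (dil σ l x) = l ^ (σ k - 1) * b k x :=
    fun l hl x => b_hom n σ hσ1 b hhom k l hl x
  have hz : ∀ j : Fin n, (σ k - 1) < σ j → ∀ z, fderiv ℝ (b k) z (Pi.single j 1) = 0 :=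
    fun j hj z => deriv_zero_hom n σ (σ k - 1) (b k) (hb k) hom j hj z
  have part1 : ∀ x y : Fin n → ℝ, (∀ i, σ i ≤ σ k - 1 → x i = y i) → b k x = b k y := by
    intro x y hxy
    exact main_dep n σ (σ k - 1) (b k) ((hb k).differentiable (by simp))
      hz x y hxy
  refine ⟨part1, ?_⟩
  intro x y hxy
  apply part1
  intro i hi
  apply hxy
  by_contra hik
  push_neg at hik
  have : σ k ≤ σ i := hσmono (by exact_mod_cast hik)
  have := hσ1 k
  omega
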